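/- arXiv:2501.00606 — 4 statements merged into one kernel-verified Lean document; each statement's English description precedes it below -/
import Mathlib

section
/- Let κ > 0, β > 0, and c ∈ ℝⁿ. Define w* ∈ ℝⁿ componentwise by w*ᵢ = cᵢ if cᵢ > √(2β/κ) and w*ᵢ = 0 otherwise. Then w* ≥ 0 and for every w ∈ ℝⁿ with w ≥ 0 (componentwise), (κ/2)‖w* − c‖² + β·card{i : w*ᵢ ≠ 0} ≤ (κ/2)‖w − c‖² + β·card{i : wᵢ ≠ 0}. -/
open Finset

lemma card_as_sum (n : ℕ) (p : Fin n → Prop) [DecidablePred p] :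
    (({i | p i} : Finset (Fin n)).card : ℝ) = ∑ i, if p i then (1:ℝ) else 0 := by
  rw [show ({i | p i} : Finset (Fin n)) = Finset.filter p univ from rfl, Finset.card_filter]
  push_cast
  simp

/-- Hard-thresholding solves the nonnegatively constrained ℓ₀-regularized
least-squares problem: with `κ > 0`, `β > 0`, `c ∈ ℝⁿ`, the vector `w*` defined by
`w*ᵢ = cᵢ` if `cᵢ > √(2β/κ)` and `w*ᵢ = 0` otherwise is nonnegative and minimizes
`(κ/2)‖w − c‖² + β‖w‖₀` over the nonnegative orthant. -/
theorem hard_thresholding_min (n : ℕ) (κ β : ℝ) (hκ : 0 < κ) (hβ : 0 < β)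
    (c wstar : Fin n → ℝ)
    (hws : ∀ i, wstar i = if c i > Real.sqrt (2 * β / κ) then c i else 0) :
    (∀ i, 0 ≤ wstar i) ∧
    ∀ w : Fin n → ℝ, (∀ i, 0 ≤ w i) →
      κ / 2 * (∑ i, (wstar i - c i) ^ 2) + β * ({i | wstar i ≠ 0} : Finset (Fin n)).card ≤
        κ / 2 * (∑ i, (w i - c i) ^ 2) + β * ({i | w i ≠ 0} : Finset (Fin n)).card := by
  have ht : 0 ≤ Real.sqrt (2 * β / κ) := Real.sqrt_nonneg _
  have htsq : Real.sqrt (2 * β / κ) ^ 2 = 2 * β / κ := by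
    rw [Real.sq_sqrt]; positivity
  constructor
  · intro i
    rw [hws i]
    split_ifs with h
    · exact le_of_lt (lt_of_le_of_lt ht h)
    · exact le_refl 0
  · intro w hw
    rw [card_as_sum, card_as_sum, mul_sum, mul_sum, mul_sum, mul_sum,
      ← Finset.sum_add_distrib, ← Finset.sum_add_distrib]
    apply Finset.sum_le_sum
    intro i _
    have key : κ / 2 * (wstar i - c i) ^ 2 + β * (if wstar i ≠ 0 then (1:ℝ) else 0) ≤
        κ / 2 * (w i - c i) ^ 2 + β * (if w i ≠ 0 then (1:ℝ) else 0) := by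
      rw [hws i]
      by_cases h : c i > Real.sqrt (2 * β / κ)
      · have hcne : c i ≠ 0 := ne_of_gt (lt_of_le_of_lt ht h)
        rw [if_pos h, if_pos hcne]
        by_cases hw0 : w i = 0
        · rw [if_neg (not_not_intro hw0), hw0]
          have hcsq : 2 * β / κ < c i ^ 2 := by nlinarith
          have : 2 * β < κ * c i ^ 2 := by
            rw [div_lt_iff₀ hκ] at hcsq; nlinarith
          nlinarith
        · rw [if_pos hw0]
          nlinarith [mul_nonneg hκ.le (sq_nonneg (w i - c i))]
      · rw [if_neg h, if_neg (by simp : ¬ (0:ℝ) ≠ 0)]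
        have hc : c i ≤ Real.sqrt (2 * β / κ) := not_lt.mp h
        by_cases hw0 : w i = 0
        · rw [if_neg (not_not_intro hw0), hw0]
        · rw [if_pos hw0]
          rcases le_or_gt (c i) 0 with hc0 | hc0
          · nlinarith [mul_nonneg hκ.le (sq_nonneg (w i)),
              mul_nonneg hκ.le (mul_nonneg (hw i) (neg_nonneg.2 hc0))]
          · have hcsq : c i ^ 2 ≤ 2 * β / κ := by nlinarith
            have : κ * c i ^ 2 ≤ 2 * β := by
              rw [le_div_iff₀ hκ] at hcsq; nlinarith
            nlinarith [mul_nonneg hκ.le (sq_nonneg (w i - c i))]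
    convert key using 2 <;> ring_nf
end

section
/- Let C be a real symmetric n×n matrix and ρ > 0. Then C² + (4/ρ)I is positive definite; let S be its positive semidefinite square root and set X = (1/2)(C + S). Then X is positive definite, X commutes with C, ρ(X − C) = X⁻¹, and X is the unique minimizer of the function Y ↦ −log det Y + (ρ/2)‖Y − C‖_F² over all symmetric positive definite n×n matrices Y. -/
/-!
The scalar map `proxNegLog ρ x = (x + √(x² + 4/ρ)) / 2` is the positive root of
`ρ t (t - x) = 1`, i.e. the minimiser of `t ↦ -log t + ρ/2 (t - x)²` on `t > 0`. By uniqueness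
of positive square roots, `S = f(C)` with `f x = √(x² + 4/ρ)`, so `X = proxNegLog ρ (C)` in the
continuous functional calculus of `C`; positivity of `X`, commutation with `C` and
`ρ (X - C) X = 1` are then the corresponding scalar facts.

For minimality of the objective `F`, `ρ (X - C) = X⁻¹` turns the expansion of
`‖Y - C‖²` around `X` into
`F Y = F X + (log det X - log det Y + tr (X⁻¹ Y) - n) + ρ/2 ‖Y - X‖²`,
and the bracket is nonnegative by `log λ ≤ λ - 1` applied to the eigenvalues of
`X^{-1/2} Y X^{-1/2}`.
-/

open Matrix
open scoped MatrixOrder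

noncomputable def proxNegLog (ρ x : ℝ) : ℝ := (x + √(x ^ 2 + 4 / ρ)) / 2

@[fun_prop]
lemma continuous_proxNegLog (ρ : ℝ) : Continuous (proxNegLog ρ) := by
  unfold proxNegLog
  fun_prop

lemma proxNegLog_pos {ρ : ℝ} (hρ : 0 < ρ) (x : ℝ) : 0 < proxNegLog ρ x := by
  have : |x| < √(x ^ 2 + 4 / ρ) := by
    rw [← Real.sqrt_sq_eq_abs]
    exact Real.sqrt_lt_sqrt (sq_nonneg x) (by linarith [show 0 < 4 / ρ by positivity])
  unfold proxNegLog
  linarith [neg_abs_le x]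

lemma mul_proxNegLog_sub_mul_proxNegLog {ρ : ℝ} (hρ : 0 < ρ) (x : ℝ) :
    ρ * ((proxNegLog ρ x - x) * proxNegLog ρ x) = 1 := by
  have h := Real.sq_sqrt (by positivity : 0 ≤ x ^ 2 + 4 / ρ)
  calc ρ * ((proxNegLog ρ x - x) * proxNegLog ρ x)
      = ρ * ((√(x ^ 2 + 4 / ρ) ^ 2 - x ^ 2) / 4) := by unfold proxNegLog; ring
    _ = 1 := by rw [h]; field_simp; ring

lemma sum_sum_sq_eq_zero_iff {m n : Type*} [Fintype m] [Fintype n] {A : Matrix m n ℝ} :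
    ∑ i, ∑ j, A i j ^ 2 = 0 ↔ A = 0 := by
  simp [Fintype.sum_eq_zero_iff_of_nonneg, Pi.le_def, Finset.sum_nonneg, sq_nonneg,
    ← Matrix.ext_iff, funext_iff]

variable {m : Type*} [Fintype m] [DecidableEq m]

lemma eq_cfc_sqrt_sq_add {c : ℝ} (hc : 0 ≤ c) {C S : Matrix m m ℝ} (hC : C.IsHermitian)
    (hS : S.PosSemidef) (hS2 : S * S = C * C + c • 1) :
    S = cfc (fun x => √(x ^ 2 + c)) C := by
  have hC' := hC.isSelfAdjoint
  have hT : 0 ≤ cfc (fun x => √(x ^ 2 + c)) C := cfc_nonneg fun x _ => Real.sqrt_nonneg _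
  have hT2 : cfc (fun x => √(x ^ 2 + c)) C * cfc (fun x => √(x ^ 2 + c)) C =
      C * C + c • 1 := by
    rw [← cfc_mul .., ← cfc_id' ℝ C, ← cfc_mul .., cfc_id' ℝ C, Algebra.smul_def, mul_one,
      ← cfc_const c C, ← cfc_add ..]
    refine cfc_congr fun x _ => ?_
    rw [Real.mul_self_sqrt (by positivity), sq]
  rw [← CFC.sqrt_mul_self S hS.nonneg, hS2, ← hT2, CFC.sqrt_mul_self _ hT]

lemma half_smul_add_eq_cfc_proxNegLog {ρ : ℝ} (hρ : 0 < ρ) {C S : Matrix m m ℝ}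
    (hC : C.IsHermitian) (hS : S.PosSemidef) (hS2 : S * S = C * C + (4 / ρ) • 1) :
    (1 / 2 : ℝ) • (C + S) = cfc (proxNegLog ρ) C := by
  have hC' := hC.isSelfAdjoint
  have hprox : proxNegLog ρ = fun x => (1 / 2 : ℝ) • (x + √(x ^ 2 + 4 / ρ)) := by
    ext x
    simp only [proxNegLog, smul_eq_mul]
    ring
  rw [hprox, cfc_smul .., cfc_add .., cfc_id' ℝ C,
    ← eq_cfc_sqrt_sq_add (by positivity) hC hS hS2]

lemma posDef_cfc_proxNegLog {ρ : ℝ} (hρ : 0 < ρ) {C : Matrix m m ℝ} (hC : C.IsHermitian) :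
    (cfc (proxNegLog ρ) C).PosDef := by
  rw [← isStrictlyPositive_iff_posDef, cfc_isStrictlyPositive_iff (proxNegLog ρ) C (by fun_prop)
    hC.isSelfAdjoint]
  exact fun x _ => proxNegLog_pos hρ x

lemma smul_cfc_proxNegLog_sub_eq_inv {ρ : ℝ} (hρ : 0 < ρ) {C : Matrix m m ℝ}
    (hC : C.IsHermitian) :
    ρ • (cfc (proxNegLog ρ) C - C) = (cfc (proxNegLog ρ) C)⁻¹ := by
  have hC' := hC.isSelfAdjoint
  refine (inv_eq_left_inv ?_).symm
  have : cfc (fun x => ρ • ((proxNegLog ρ x - x) * proxNegLog ρ x)) C = 1 := by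
    simp only [smul_eq_mul, mul_proxNegLog_sub_mul_proxNegLog hρ, cfc_const_one ℝ C]
  rwa [cfc_smul .., cfc_mul .., cfc_sub .., cfc_id' ℝ C, ← smul_mul_assoc] at this

lemma log_det_le_trace_sub_card {A : Matrix m m ℝ} (hA : A.PosDef) :
    Real.log A.det ≤ A.trace - Fintype.card m := by
  have hev := hA.eigenvalues_pos
  rw [hA.1.det_eq_prod_eigenvalues, hA.1.trace_eq_sum_eigenvalues]
  simp only [RCLike.ofReal_real_eq_id, id_eq]
  rw [Real.log_prod fun i _ => (hev i).ne']
  calc ∑ i, Real.log (hA.1.eigenvalues i)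
      ≤ ∑ i, (hA.1.eigenvalues i - 1) :=
        Finset.sum_le_sum fun i _ => Real.log_le_sub_one_of_pos (hev i)
    _ = ∑ i, hA.1.eigenvalues i - Fintype.card m := by simp [Finset.sum_sub_distrib]

lemma log_det_sub_log_det_le {X Y : Matrix m m ℝ} (hX : X.PosDef) (hY : Y.PosDef) :
    Real.log Y.det - Real.log X.det ≤ (X⁻¹ * Y).trace - Fintype.card m := by
  set R := CFC.sqrt X
  have hR : R.PosDef := (IsStrictlyPositive.sqrt X hX.isStrictlyPositive).posDef
  have hRR : R * R = X := CFC.sqrt_mul_sqrt_self X hX.posSemidef.nonneg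
  have hA : (R⁻¹ * Y * R⁻¹).PosDef := by
    have := (IsUnit.posDef_star_right_conjugate_iff hR.inv.isUnit).mpr hY
    rwa [star_eq_conjTranspose, hR.inv.1.eq] at this
  have hdet : (R⁻¹ * Y * R⁻¹).det = Y.det / X.det := by
    rw [← hRR, det_mul, det_mul, det_mul, det_nonsing_inv, Ring.inverse_eq_inv]
    field_simp
  have htrace : (R⁻¹ * Y * R⁻¹).trace = (X⁻¹ * Y).trace := by
    rw [trace_mul_cycle, ← Matrix.mul_inv_rev, hRR]
  have := log_det_le_trace_sub_card hA
  rwa [hdet, htrace, Real.log_div hY.det_pos.ne' hX.det_pos.ne'] at this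

noncomputable def lUpdateObjective (ρ : ℝ) (C Y : Matrix m m ℝ) : ℝ :=
  -Real.log Y.det + ρ / 2 * ∑ i, ∑ j, (Y i j - C i j) ^ 2

lemma lUpdateObjective_add_le {ρ : ℝ} {C X Y : Matrix m m ℝ} (hX : X.PosDef)
    (hXC : ρ • (X - C) = X⁻¹) (hY : Y.PosDef) :
    lUpdateObjective ρ C X + ρ / 2 * ∑ i, ∑ j, (Y i j - X i j) ^ 2 ≤
      lUpdateObjective ρ C Y := by
  have hcross : ρ * ∑ i, ∑ j, (Y i j - X i j) * (X i j - C i j) =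
      (X⁻¹ * Y).trace - Fintype.card m := by
    calc ρ * ∑ i, ∑ j, (Y i j - X i j) * (X i j - C i j)
        = ((Y - X) * (ρ • (X - C))ᵀ).trace := by
          rw [transpose_smul, Matrix.mul_smul, trace_smul, smul_eq_mul]
          rfl
      _ = (X⁻¹ * Y).trace - Fintype.card m := by
          rw [hXC, transpose_nonsing_inv, ← conjTranspose_eq_transpose_of_trivial, hX.1.eq,
            trace_mul_comm, Matrix.mul_sub, trace_sub, nonsing_inv_mul _ hX.det_pos.ne'.isUnit,
            trace_one]
  have hexpand : ∑ i, ∑ j, (Y i j - C i j) ^ 2 = ∑ i, ∑ j, (Y i j - X i j) ^ 2 +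
      2 * ∑ i, ∑ j, (Y i j - X i j) * (X i j - C i j) + ∑ i, ∑ j, (X i j - C i j) ^ 2 := by
    simp only [Finset.mul_sum, ← Finset.sum_add_distrib]
    congr! 2 with i _ j _
    ring
  have := log_det_sub_log_det_le hX hY
  unfold lUpdateObjective
  rw [hexpand]
  linarith

/-- Closed-form solution of the (full-rank) L-update step: for a real symmetric
`C` and `ρ > 0`, `C² + (4/ρ)I` is positive definite; if `S` is its positive
semidefinite square root and `X = (1/2)(C + S)`, then `X` is positive definite,
`X` commutes with `C`, `ρ(X − C) = X⁻¹`, and `X` is the unique minimizer of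
`Y ↦ −log det Y + (ρ/2)‖Y − C‖_F²` over symmetric positive definite matrices. -/
theorem matrix_L_update (n : ℕ) (ρ : ℝ) (hρ : 0 < ρ)
    (C S X : Matrix (Fin n) (Fin n) ℝ) (hC : C.IsSymm)
    (hS : S.PosSemidef) (hS2 : S * S = C * C + (4 / ρ) • 1)
    (hX : X = (1 / 2 : ℝ) • (C + S)) :
    (C * C + (4 / ρ) • (1 : Matrix (Fin n) (Fin n) ℝ)).PosDef ∧
    X.PosDef ∧
    X * C = C * X ∧
    ρ • (X - C) = X⁻¹ ∧
    ∀ Y : Matrix (Fin n) (Fin n) ℝ, Y.IsSymm → Y.PosDef →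
      (-Real.log X.det + ρ / 2 * (∑ i, ∑ j, (X i j - C i j) ^ 2) ≤
          -Real.log Y.det + ρ / 2 * (∑ i, ∑ j, (Y i j - C i j) ^ 2)) ∧
      ((-Real.log Y.det + ρ / 2 * (∑ i, ∑ j, (Y i j - C i j) ^ 2) =
          -Real.log X.det + ρ / 2 * (∑ i, ∑ j, (X i j - C i j) ^ 2)) → Y = X) := by
  have hCh : C.IsHermitian := isHermitian_iff_isSymm.mpr hC
  have hXcfc : X = cfc (proxNegLog ρ) C :=
    hX.trans (half_smul_add_eq_cfc_proxNegLog hρ hCh hS hS2)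
  have hXpd : X.PosDef := hXcfc ▸ posDef_cfc_proxNegLog hρ hCh
  have hXinv : ρ • (X - C) = X⁻¹ := hXcfc ▸ smul_cfc_proxNegLog_sub_eq_inv hρ hCh
  refine ⟨?_, hXpd, ?_, hXinv, fun Y _ hY => ?_⟩
  · simpa only [hCh.eq] using PosDef.posSemidef_add (posSemidef_conjTranspose_mul_self C)
      (PosDef.one.smul (by positivity : 0 < 4 / ρ))
  · simpa only [hXcfc, cfc_id ℝ C hCh.isSelfAdjoint] using
      (cfc_commute_cfc (proxNegLog ρ) id C).eq
  have key := lUpdateObjective_add_le hXpd hXinv hY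
  have hdist : 0 ≤ ρ / 2 * ∑ i, ∑ j, (Y i j - X i j) ^ 2 := by positivity
  unfold lUpdateObjective at key
  refine ⟨by linarith, fun heq => ?_⟩
  have hzero : ρ / 2 * ∑ i, ∑ j, (Y i j - X i j) ^ 2 = 0 := by linarith
  have hdist0 := (mul_eq_zero.mp hzero).resolve_left (by positivity)
  exact sub_eq_zero.mp ((sum_sum_sq_eq_zero_iff (A := Y - X)).mp hdist0)
end

section
/- Let σ > 0 and let μ_σ be the measure on ℝ with density t ↦ (1/(2σ))·exp(−|t|/σ) with respect to Lebesgue measure (the zero-mean Laplace distribution with scale σ). For every v ≥ 0, the pushforward of μ_σ under the map t ↦ max(v + t, 0) equals ((1/2)·exp(−v/σ))·δ₀ + ν_v, where δ₀ is the Dirac measure at 0 and ν_v is the measure with density w ↦ (1/(2σ))·exp(−|w − v|/σ) with respect to Lebesgue measure restricted to the interval (0, ∞). -/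
/-!
Split the Laplace law at `-v`. On `(-∞, -v]` the map `t ↦ max (v + t) 0` is constantly `0`,
so that part is pushed to the atom `δ₀` with mass the left tail
`∫_{-∞}^{-v} e^{t/σ}/(2σ) dt = e^{-v/σ}/2`. On `(-v, ∞)` the map is the translation `t ↦ v + t`,
which preserves Lebesgue measure and carries the density `t ↦ e^{-|t|/σ}/(2σ)` on `(-v, ∞)` to
`w ↦ e^{-|w - v|/σ}/(2σ)` on `(0, ∞)`.
-/

open MeasureTheory Set Real
open scoped ENNReal

theorem MeasurableEquiv.map_withDensity_comp {α β : Type*} [MeasurableSpace α]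
    [MeasurableSpace β]
    (e : α ≃ᵐ β) (μ : Measure α) (f : β → ℝ≥0∞) :
    (μ.withDensity (f ∘ e)).map e = (μ.map e).withDensity f := by
  ext s hs
  rw [e.map_apply, withDensity_apply _ (e.measurable hs), withDensity_apply _ hs,
    e.restrict_map, lintegral_map_equiv]
  rfl

namespace MeasureTheory.Measure

theorem map_restrict_of_eqOn_const {α β : Type*} [MeasurableSpace α] [MeasurableSpace β]
    {μ : Measure α} {f : α → β} {s : Set α} {c : β}
    (hs : MeasurableSet s) (hf : EqOn f (fun _ ↦ c) s) :
    (μ.restrict s).map f = μ s • dirac c := by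
  rw [map_congr (ae_restrict_of_forall_mem hs hf), map_const, restrict_apply_univ]

theorem map_add_left_restrict_withDensity {G : Type*} [MeasurableSpace G] [AddGroup G]
    [MeasurableAdd G] (μ : Measure G) [μ.IsAddLeftInvariant] (a : G) (g : G → ℝ≥0∞)
    {s : Set G} (hs : MeasurableSet s) :
    ((μ.withDensity fun x ↦ g (a + x)).restrict ((a + ·) ⁻¹' s)).map (a + ·) =
      (μ.restrict s).withDensity g := by
  let e := MeasurableEquiv.addLeft a
  rw [restrict_withDensity (measurable_const_add a hs)]
  change ((μ.restrict (e ⁻¹' s)).withDensity (g ∘ e)).map e = _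
  rw [e.map_withDensity_comp, ← e.restrict_map, MeasurableEquiv.coe_addLeft, map_add_left_eq_self]

end MeasureTheory.Measure

theorem lintegral_laplace_density_Iic {σ c : ℝ} (hσ : 0 < σ) (hc : c ≤ 0) :
    ∫⁻ t in Iic c, ENNReal.ofReal (1 / (2 * σ) * exp (-|t| / σ)) =
      ENNReal.ofReal (1 / 2 * exp (c / σ)) := by
  have hσ' : 0 < σ⁻¹ := inv_pos.2 hσ
  have h_density : EqOn (fun t ↦ ENNReal.ofReal (1 / (2 * σ) * exp (-|t| / σ)))
      (fun t ↦ ENNReal.ofReal (1 / (2 * σ) * exp (σ⁻¹ * t))) (Iic c) := by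
    intro t (ht : t ≤ c)
    dsimp only
    rw [abs_of_nonpos (ht.trans hc), neg_neg, inv_mul_eq_div]
  rw [setLIntegral_congr_fun measurableSet_Iic h_density,
    ← ofReal_integral_eq_lintegral_ofReal ((integrableOn_exp_mul_Iic hσ' c).const_mul _)
      (Filter.Eventually.of_forall fun t ↦ by positivity),
    integral_const_mul, integral_exp_mul_Iic hσ']
  congr 1
  field_simp

/-- Pushforward of the Laplace distribution under the shifted positive-part map:
for `σ > 0` and `v ≥ 0`, the pushforward of the zero-mean Laplace measure with
scale `σ` under `t ↦ max(v + t, 0)` equals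
`((1/2)exp(−v/σ))·δ₀ + ν_v`, where `ν_v` has density `w ↦ (1/(2σ))exp(−|w − v|/σ)`
with respect to Lebesgue measure restricted to `(0, ∞)`. -/
theorem laplace_positive_part_pushforward (σ v : ℝ) (hσ : 0 < σ) (hv : 0 ≤ v) :
    Measure.map (fun t : ℝ => max (v + t) 0)
        (volume.withDensity fun t : ℝ =>
          ENNReal.ofReal (1 / (2 * σ) * Real.exp (-|t| / σ))) =
      ENNReal.ofReal (1 / 2 * Real.exp (-v / σ)) • Measure.dirac (0 : ℝ) +
        (volume.restrict (Set.Ioi (0 : ℝ))).withDensity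
          (fun w : ℝ => ENNReal.ofReal (1 / (2 * σ) * Real.exp (-|w - v| / σ))) := by
  set g : ℝ → ℝ≥0∞ := fun w ↦ ENNReal.ofReal (1 / (2 * σ) * exp (-|w - v| / σ))
  set μ := volume.withDensity fun t ↦ g (v + t)
  have hμ :
      volume.withDensity (fun t ↦ ENNReal.ofReal (1 / (2 * σ) * exp (-|t| / σ))) = μ := by
    simp only [μ, g, add_sub_cancel_left]
  have h_atom : (μ.restrict (Iic (-v))).map (fun t ↦ max (v + t) 0) =
      ENNReal.ofReal (1 / 2 * exp (-v / σ)) • Measure.dirac 0 := by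
    rw [Measure.map_restrict_of_eqOn_const measurableSet_Iic
      (fun t (ht : t ≤ -v) ↦ max_eq_right (by linarith)), ← hμ,
      withDensity_apply _ measurableSet_Iic, lintegral_laplace_density_Iic hσ (by linarith)]
  have h_shift : (μ.restrict (Ioi (-v))).map (fun t ↦ max (v + t) 0) =
      (volume.restrict (Ioi 0)).withDensity g := by
    rw [Measure.map_congr (ae_restrict_of_forall_mem measurableSet_Ioi
        (fun t (ht : -v < t) ↦ max_eq_left (by linarith))),
      ← zero_sub v, ← preimage_const_add_Ioi,
      Measure.map_add_left_restrict_withDensity _ _ _ measurableSet_Ioi]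
  rw [hμ, ← Measure.restrict_add_restrict_compl (μ := μ) measurableSet_Iic, compl_Iic,
    Measure.map_add _ _ (by fun_prop), h_atom, h_shift]
end

section
/- Let ρ > 0, γ ≥ 0, ŵ > 0, and f ∈ ℝ. Set a* = max(f/ŵ − γ/(ρŵ²), 0). Then a* ≥ 0 and for every a ≥ 0: (ρ/2)(a*ŵ − f)² + γa* ≤ (ρ/2)(aŵ − f)² + γa. -/
/-- Scalar closed-form solution of the a-update subproblem: with `ρ > 0`, `γ ≥ 0`,
`ŵ > 0`, `f ∈ ℝ`, the value `a* = max(f/ŵ − γ/(ρŵ²), 0)` is nonnegative and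
minimizes `a ↦ (ρ/2)(aŵ − f)² + γa` over `a ≥ 0`. -/
theorem scalar_a_update (ρ γ what f astar : ℝ) (hρ : 0 < ρ) (hγ : 0 ≤ γ)
    (hw : 0 < what) (has : astar = max (f / what - γ / (ρ * what ^ 2)) 0) :
    0 ≤ astar ∧
    ∀ a : ℝ, 0 ≤ a →
      ρ / 2 * (astar * what - f) ^ 2 + γ * astar ≤
        ρ / 2 * (a * what - f) ^ 2 + γ * a := by
  have hw2 : (0:ℝ) < ρ * what ^ 2 := by positivity
  constructor
  · rw [has]; exact le_max_right _ _
  intro a ha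
  rcases le_or_gt (f / what - γ / (ρ * what ^ 2)) 0 with h | h
  · rw [has, max_eq_right h]
    have h' : f / what ≤ γ / (ρ * what ^ 2) := by linarith
    have hf : ρ * what * f ≤ γ := by
      rw [div_le_div_iff₀ hw hw2] at h'
      nlinarith [hw.le, hρ.le]
    nlinarith [sq_nonneg (a * what), mul_nonneg hγ ha]
  · rw [has, max_eq_left h.le]
    have key : (f / what - γ / (ρ * what ^ 2)) * (ρ * what ^ 2) = ρ * what * f - γ := by
      field_simp
    nlinarith [sq_nonneg ((a - (f / what - γ / (ρ * what ^ 2))) * what), sq_nonneg what]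
end
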